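/- Let X be a {−1,+1}-valued random variable and let W be any observation of X on the same probability space. Then E[ h_b( (1 + E[X|W])/2 ) ] = Σ_{k=1}^{∞} c_k · ( 1 − E[ (E[X|W])^{2k} ] ), where c_k := 1/(ln(2)·2k·(2k−1)). In particular, taking W trivial, h_b((1+μ)/2) = Σ_{k=1}^{∞} c_k·(1 − μ^{2k}) for every μ ∈ [−1,1], and this series converges uniformly on [−1,1]. -/

import Mathlib

open MeasureTheory ProbabilityTheory

noncomputable section

/-- The binary entropy function (base 2). -/
def hb (p : ℝ) : ℝ := -(p * Real.logb 2 p) - (1 - p) * Real.logb 2 (1 - p)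

/-- Conditional expectation `E[X | W]` of `X` given the σ-algebra generated by `W`. -/
def condMean {Ω β E : Type*} [MeasurableSpace Ω] [MeasurableSpace β]
    [NormedAddCommGroup E] [NormedSpace ℝ E] [CompleteSpace E]
    (μ : Measure Ω) (X : Ω → E) (W : Ω → β) : Ω → E :=
  μ[X | MeasurableSpace.comap W inferInstance]

/-- Bit-error probability of the MAP decision rule for `X ∈ {±1}` given `W`. -/
def BER {Ω β : Type*} [MeasurableSpace Ω] [MeasurableSpace β]
    (μ : Measure Ω) (X : Ω → ℝ) (W : Ω → β) : ℝ :=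
  (1 - ∫ ω, |condMean μ X W ω| ∂μ) / 2

/-- Minimum mean squared error of estimating `X` from `W`. -/
def mmse {Ω β : Type*} [MeasurableSpace Ω] [MeasurableSpace β]
    (μ : Measure Ω) (X : Ω → ℝ) (W : Ω → β) : ℝ :=
  ∫ ω, (X ω - condMean μ X W ω) ^ 2 ∂μ

/-- Uniform distribution on `{-1, 1} ⊆ ℝ`. -/
def signMeasure : Measure ℝ := (2 : ENNReal)⁻¹ • (Measure.dirac (-1) + Measure.dirac 1)

/-- Capacity of the BMS channel (in multiplicative-noise form) with noise law `PZ`: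
`C = 1 - E[h_b((1 + E[X_u | Y_u])/2)]` where `X_u` is uniform on `{±1}`, independent of
`Z₀ ~ PZ`, and `Y_u = X_u · Z₀`. -/
def capacity (PZ : Measure ℝ) : ℝ :=
  1 - ∫ p, hb ((1 + condMean (signMeasure.prod PZ)
        (fun q : ℝ × ℝ => q.1) (fun q : ℝ × ℝ => q.1 * q.2) p) / 2) ∂(signMeasure.prod PZ)

/-- Evaluation vector of the multilinear polynomial whose coefficients on monomials
of degree at most `r` are given by `α` (higher-degree coefficients being ignored),
evaluated at the point `v ∈ 𝔽₂^m` with index `i = Σ_j v_j 2^j`. -/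
def RMword (r m : ℕ) (α : Finset (Fin m) → ZMod 2) : Fin (2 ^ m) → ZMod 2 :=
  fun i => ∑ S ∈ Finset.univ.filter (fun S : Finset (Fin m) => S.card ≤ r),
    α S * ∏ j ∈ S, ((((i : ℕ) / 2 ^ (j : ℕ)) % 2 : ℕ) : ZMod 2)

/-- The Reed–Muller code RM(r, m) ⊆ 𝔽₂^{2^m}. -/
def RMcode (r m : ℕ) : Finset (Fin (2 ^ m) → ZMod 2) :=
  Finset.image (RMword r m) Finset.univ

/-- The rate `R(r,m)` of RM(r,m). -/
def RMrate (r m : ℕ) : ℝ := (2 ^ m : ℝ)⁻¹ * ∑ i ∈ Finset.range (r + 1), (m.choose i : ℝ)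

/-- BPSK modulation map `c ↦ ((-1)^{c_0}, …, (-1)^{c_{N-1}})`. -/
def bpsk {N : ℕ} (c : Fin N → ZMod 2) : Fin N → ℝ := fun i => (-1 : ℝ) ^ ((c i).val)

/-- BPSK image of a binary code. -/
def bpskImage {N : ℕ} (C : Finset (Fin N → ZMod 2)) : Finset (Fin N → ℝ) :=
  letI := Classical.decEq (Fin N → ℝ)
  C.image bpsk

/-- BPSK image of RM(r,m). -/
def bpskRM (r m : ℕ) : Finset (Fin (2 ^ m) → ℝ) := bpskImage (RMcode r m)

/-- Uniform probability measure on a finite set. -/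
def uniformOnFinset {α : Type*} [MeasurableSpace α] (s : Finset α) : Measure α :=
  (s.card : ENNReal)⁻¹ • ∑ x ∈ s, Measure.dirac x

/-- `ρ(m) = (6 ln m + 34)/(5 √m)`. -/
def rho (m : ℕ) : ℝ := (6 * Real.log m + 34) / (5 * Real.sqrt m)

/-- Inverse of the binary entropy function restricted to `[0, 1/2]`. -/
def hbInv (u : ℝ) : ℝ := sSup {p : ℝ | p ∈ Set.Icc (0 : ℝ) (1 / 2) ∧ hb p ≤ u}

/-- `ψ(u) = 1 - (1 - 2 h_b^{-1}(u))²`. -/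
def psi (u : ℝ) : ℝ := 1 - (1 - 2 * hbInv u) ^ 2

/-- `Ψ(u) = ∫₀^u ψ(v) dv`. -/
def PsiInt (u : ℝ) : ℝ := ∫ v in (0 : ℝ)..u, psi v

/-- The coefficients `c_k = 1/(ln 2 · 2k (2k-1))`. -/
def ck (k : ℕ) : ℝ := 1 / (Real.log 2 * (2 * k) * (2 * k - 1))

/-- The channel moments `q_k = E[(E[X_u | Y_u])^{2k}]` for uniform input. -/
def qmom (PZ : Measure ℝ) (k : ℕ) : ℝ :=
  ∫ p, (condMean (signMeasure.prod PZ)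
      (fun q : ℝ × ℝ => q.1) (fun q : ℝ × ℝ => q.1 * q.2) p) ^ (2 * k) ∂(signMeasure.prod PZ)

end

/-
For `|t| < 1` the two logarithmic series give
`(1 + t) log (1 + t) + (1 - t) log (1 - t) = ∑_{k ≥ 1} t^{2k} / (k (2k - 1))`,
that is, `1 - h_b((1 + t)/2) = ∑_{k ≥ 1} c_k t^{2k}`. Since `∑ c_k` converges, the right-hand
side is continuous on `[-1, 1]`, so the identity extends to the endpoints; at `t = 1` it says
`∑ c_k = 1`, which turns it into `h_b((1 + t)/2) = ∑ c_k (1 - t^{2k})`. The terms of this series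
lie in `[0, c_k]` on `[-1, 1]`, which gives uniform convergence and, by dominated convergence,
the termwise integration at `t = E[X|W]`, a random variable with values in `[-1, 1]`.
-/

open Real Set Filter

lemma hb_eq_binEntropy_div_log_two (p : ℝ) : hb p = binEntropy p / log 2 := by
  simp only [hb, binEntropy, logb, log_inv]
  ring

lemma continuous_hb : Continuous hb := by
  simp only [funext hb_eq_binEntropy_div_log_two]
  fun_prop

lemma ck_succ_eq (k : ℕ) : ck (k + 1) = 1 / (log 2 * ((2 * k + 1) * (2 * k + 2))) := by
  rw [ck]
  push_cast
  congr 1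
  ring

lemma ck_succ_nonneg (k : ℕ) : 0 ≤ ck (k + 1) := by
  rw [ck_succ_eq]
  have := log_pos one_lt_two
  positivity

lemma summable_ck_succ : Summable fun k : ℕ => ck (k + 1) := by
  have hsq : Summable fun k : ℕ => 1 / (log 2 * ((k : ℝ) + 1) ^ 2) :=
    ((summable_nat_add_iff 1).mpr (summable_one_div_nat_pow.mpr one_lt_two)).mul_left (log 2)⁻¹
      |>.congr fun k => by push_cast; field_simp
  refine hsq.of_nonneg_of_le ck_succ_nonneg fun k => ?_
  rw [ck_succ_eq]
  have := log_pos one_lt_two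
  gcongr
  nlinarith

lemma hasSum_mul_log_add_mul_log {t : ℝ} (ht : |t| < 1) :
    HasSum (fun k : ℕ => t ^ (2 * k + 2) / ((2 * k + 1) * (2 * k + 2)))
      (((1 + t) * log (1 + t) + (1 - t) * log (1 - t)) / 2) := by
  have ht2 : |t ^ 2| < 1 := by
    rw [abs_pow]
    exact pow_lt_one₀ (abs_nonneg t) ht two_ne_zero
  have hodd := (hasSum_log_sub_log_of_abs_lt_one ht).mul_left (t / 2)
  have heven := (hasSum_pow_div_log_of_abs_lt_one ht2).div_const 2
  have hlog : log (1 - t ^ 2) = log (1 + t) + log (1 - t) := by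
    rw [show 1 - t ^ 2 = (1 + t) * (1 - t) by ring]
    obtain ⟨h₁, h₂⟩ := abs_lt.mp ht
    exact log_mul (by linarith) (by linarith)
  have hvalue : ((1 + t) * log (1 + t) + (1 - t) * log (1 - t)) / 2
      = t / 2 * (log (1 + t) - log (1 - t)) - -log (1 - t ^ 2) / 2 := by
    rw [hlog]
    ring
  rw [hvalue]
  refine (hodd.sub heven).congr_fun fun k => ?_
  field_simp
  ring

lemma one_sub_hb_one_add_div_two {t : ℝ} (ht : |t| < 1) :
    1 - hb ((1 + t) / 2) = ((1 + t) * log (1 + t) + (1 - t) * log (1 - t)) / 2 / log 2 := by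
  obtain ⟨h₁, h₂⟩ := abs_lt.mp ht
  have := log_pos one_lt_two
  rw [hb, logb, logb, show 1 - (1 + t) / 2 = (1 - t) / 2 by ring,
    log_div (by linarith) two_ne_zero, log_div (by linarith) two_ne_zero]
  field_simp
  ring

lemma hasSum_ck_mul_pow_of_abs_lt_one {t : ℝ} (ht : |t| < 1) :
    HasSum (fun k : ℕ => ck (k + 1) * t ^ (2 * (k + 1))) (1 - hb ((1 + t) / 2)) := by
  rw [one_sub_hb_one_add_div_two ht, div_eq_inv_mul]
  refine ((hasSum_mul_log_add_mul_log ht).mul_left (log 2)⁻¹).congr_fun fun k => ?_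
  rw [ck_succ_eq]
  field_simp
  ring

lemma pow_two_mul_mem_Icc_zero_one {R : Type*} [Ring R] [LinearOrder R] [IsStrictOrderedRing R]
    {t : R} (ht : t ∈ Icc (-1) 1) (n : ℕ) : t ^ (2 * n) ∈ Icc 0 1 := by
  rw [pow_mul]
  exact ⟨by positivity, pow_le_one₀ (sq_nonneg t) ((sq_le_one_iff_abs_le_one t).2 (abs_le.2 ht))⟩

lemma norm_ck_mul_pow_le {t : ℝ} (ht : t ∈ Icc (-1) 1) (k : ℕ) :
    ‖ck (k + 1) * t ^ (2 * (k + 1))‖ ≤ ck (k + 1) := by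
  have := pow_two_mul_mem_Icc_zero_one ht (k + 1)
  rw [norm_mul, norm_of_nonneg (ck_succ_nonneg k), norm_of_nonneg this.1]
  exact mul_le_of_le_one_right (ck_succ_nonneg k) this.2

lemma norm_ck_mul_one_sub_pow_le {t : ℝ} (ht : t ∈ Icc (-1) 1) (k : ℕ) :
    ‖ck (k + 1) * (1 - t ^ (2 * (k + 1)))‖ ≤ ck (k + 1) := by
  have := pow_two_mul_mem_Icc_zero_one ht (k + 1)
  rw [norm_mul, norm_of_nonneg (ck_succ_nonneg k), norm_of_nonneg (by linarith [this.2])]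
  exact mul_le_of_le_one_right (ck_succ_nonneg k) (by linarith [this.1])

lemma hasSum_ck_mul_pow {t : ℝ} (ht : t ∈ Icc (-1) 1) :
    HasSum (fun k : ℕ => ck (k + 1) * t ^ (2 * (k + 1))) (1 - hb ((1 + t) / 2)) := by
  have h : EqOn (fun t : ℝ => ∑' k : ℕ, ck (k + 1) * t ^ (2 * (k + 1)))
      (fun t => 1 - hb ((1 + t) / 2)) (Icc (-1) 1) := by
    refine EqOn.of_subset_closure (s := Ioo (-1) 1) (fun t ht => ?_) ?_ ?_ Ioo_subset_Icc_self
      (by rw [closure_Ioo (by norm_num)])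
    · exact (hasSum_ck_mul_pow_of_abs_lt_one (abs_lt.mpr ht)).tsum_eq
    · exact continuousOn_tsum (fun k => by fun_prop) summable_ck_succ
        fun k _ ht => norm_ck_mul_pow_le ht k
    · exact (continuous_const.sub (continuous_hb.comp (by fun_prop))).continuousOn
  have hsum := (summable_ck_succ.of_norm_bounded (norm_ck_mul_pow_le ht)).hasSum
  rwa [show ∑' k : ℕ, ck (k + 1) * t ^ (2 * (k + 1)) = 1 - hb ((1 + t) / 2) from h ht] at hsum

lemma hasSum_ck_succ : HasSum (fun k : ℕ => ck (k + 1)) 1 := by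
  simpa [hb] using hasSum_ck_mul_pow (t := 1) (by norm_num)

lemma hasSum_ck_mul_one_sub_pow {t : ℝ} (ht : t ∈ Icc (-1) 1) :
    HasSum (fun k : ℕ => ck (k + 1) * (1 - t ^ (2 * (k + 1)))) (hb ((1 + t) / 2)) := by
  simpa only [mul_sub, mul_one, sub_sub_cancel] using hasSum_ck_succ.sub (hasSum_ck_mul_pow ht)

lemma tendstoUniformlyOn_hb_series :
    TendstoUniformlyOn (fun n t => ∑ k ∈ Finset.range n, ck (k + 1) * (1 - t ^ (2 * (k + 1))))
      (fun t => hb ((1 + t) / 2)) atTop (Icc (-1) 1) :=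
  (tendstoUniformlyOn_tsum_nat summable_ck_succ fun k _ ht => norm_ck_mul_one_sub_pow_le ht k)
    |>.congr_right fun _ ht => (hasSum_ck_mul_one_sub_pow ht).tsum_eq

lemma integral_hb_eq_tsum {Ω : Type*} [MeasurableSpace Ω] {μ : Measure Ω} [IsProbabilityMeasure μ]
    {M : Ω → ℝ} (hM : AEStronglyMeasurable M μ) (hM₁ : ∀ᵐ ω ∂μ, M ω ∈ Icc (-1) 1) :
    ∫ ω, hb ((1 + M ω) / 2) ∂μ = ∑' k : ℕ, ck (k + 1) * (1 - ∫ ω, M ω ^ (2 * (k + 1)) ∂μ) := by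
  have hpow (n : ℕ) : Integrable (fun ω => M ω ^ (2 * n)) μ :=
    .of_bound (hM.pow _) 1 <| hM₁.mono fun ω hω => by
      rw [norm_of_nonneg (pow_two_mul_mem_Icc_zero_one hω n).1]
      exact (pow_two_mul_mem_Icc_zero_one hω n).2
  have h := hasSum_integral_of_dominated_convergence
    (F := fun k ω => ck (k + 1) * (1 - M ω ^ (2 * (k + 1)))) (fun k _ => ck (k + 1))
    (fun k => (aestronglyMeasurable_const.sub (hM.pow _)).const_mul _)
    (fun k => hM₁.mono fun ω hω => norm_ck_mul_one_sub_pow_le hω k)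
    (ae_of_all _ fun _ => summable_ck_succ) (integrable_const _)
    (hM₁.mono fun ω hω => hasSum_ck_mul_one_sub_pow hω)
  refine h.tsum_eq.symm.trans (tsum_congr fun k => ?_)
  rw [integral_const_mul, integral_sub (integrable_const 1) (hpow _), integral_const]
  simp

theorem stmt_18_general {Ω β : Type*} [MeasurableSpace Ω] [MeasurableSpace β]
    (μ : Measure Ω) [IsProbabilityMeasure μ]
    (X : Ω → ℝ) (hpm : ∀ ω, X ω = -1 ∨ X ω = 1)
    (W : Ω → β) :
    (∫ ω, hb ((1 + condMean μ X W ω) / 2) ∂μ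
        = ∑' k : ℕ, ck (k + 1) * (1 - ∫ ω, (condMean μ X W ω) ^ (2 * (k + 1)) ∂μ))
    ∧ (∀ t ∈ Set.Icc (-1 : ℝ) 1,
        hb ((1 + t) / 2) = ∑' k : ℕ, ck (k + 1) * (1 - t ^ (2 * (k + 1))))
    ∧ TendstoUniformlyOn
        (fun n t => ∑ k ∈ Finset.range n, ck (k + 1) * (1 - t ^ (2 * (k + 1))))
        (fun t => hb ((1 + t) / 2)) Filter.atTop (Set.Icc (-1 : ℝ) 1) := by
  have hX : ∀ᵐ ω ∂μ, |X ω| ≤ 1 :=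
    ae_of_all _ fun ω => by rcases hpm ω with h | h <;> simp [h]
  have hM : ∀ᵐ ω ∂μ, condMean μ X W ω ∈ Icc (-1) 1 :=
    (ae_bdd_abs_condExp_of_ae_bdd_abs hX).mono fun ω hω => abs_le.mp hω
  exact ⟨integral_hb_eq_tsum integrable_condExp.aestronglyMeasurable hM,
    fun t ht => (hasSum_ck_mul_one_sub_pow ht).tsum_eq.symm, tendstoUniformlyOn_hb_series⟩

/-- series expansion of conditional entropy:
`E[h_b((1+E[X|W])/2)] = Σ_{k≥1} c_k (1 − E[(E[X|W])^{2k}])`; in particular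
`h_b((1+μ)/2) = Σ_{k≥1} c_k (1 − μ^{2k})` for `μ ∈ [−1,1]`, with uniform convergence
of the partial sums on `[−1,1]`. -/
theorem stmt_18 {Ω β : Type*} [MeasurableSpace Ω] [MeasurableSpace β]
    (μ : Measure Ω) [IsProbabilityMeasure μ]
    (X : Ω → ℝ) (hX : Measurable X) (hpm : ∀ ω, X ω = -1 ∨ X ω = 1)
    (W : Ω → β) (hW : Measurable W) :
    (∫ ω, hb ((1 + condMean μ X W ω) / 2) ∂μ
        = ∑' k : ℕ, ck (k + 1) * (1 - ∫ ω, (condMean μ X W ω) ^ (2 * (k + 1)) ∂μ))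
    ∧ (∀ t ∈ Set.Icc (-1 : ℝ) 1,
        hb ((1 + t) / 2) = ∑' k : ℕ, ck (k + 1) * (1 - t ^ (2 * (k + 1))))
    ∧ TendstoUniformlyOn
        (fun n t => ∑ k ∈ Finset.range n, ck (k + 1) * (1 - t ^ (2 * (k + 1))))
        (fun t => hb ((1 + t) / 2)) Filter.atTop (Set.Icc (-1 : ℝ) 1) :=
  stmt_18_general μ X hpm W
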